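/- There exist real constants c₁ > 0, c₂ > 0 and an integer G such that for every integer g ≥ G the set D̃_g is finite and c₁·g^{3/2} ≤ #D̃_g ≤ c₂·g^{3/2}. -/

import Mathlib

/-- `N` is a repdigit in base `g`, one-digit numbers allowed:
`N = d * (g^k - 1)/(g-1)` for some digit `1 ≤ d ≤ g-1` and some `k ≥ 1`. -/
def RepdigitT (g N : ℕ) : Prop :=
  0 < N ∧ ∃ d k : ℕ, 1 ≤ d ∧ d ≤ g - 1 ∧ 1 ≤ k ∧ N * (g - 1) = d * (g ^ k - 1)

/-- The set of Diophantine triples with values in the extended repdigit set. -/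
def DioTriplesT (g : ℕ) : Set (ℕ × ℕ × ℕ) :=
  {p | 0 < p.2.2 ∧ p.2.2 < p.2.1 ∧ p.2.1 < p.1 ∧
    RepdigitT g (p.1 * p.2.1 + 1) ∧ RepdigitT g (p.1 * p.2.2 + 1) ∧
    RepdigitT g (p.2.1 * p.2.2 + 1)}

/-
Write `ab + 1 = d₁ R_m`, `ac + 1 = d₂ R_n`, `bc + 1 = d₃ R_l` with repunits
`R_k = (g ^ k - 1) / (g - 1)` and digits `d_i < g`, so that `l ≤ n ≤ m`. Eliminating `a` from the
first two equations exhibits a nonzero multiple of `g ^ n` of size at most `3gb`; together with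
`bc < g ^ l ≤ g ^ n` this gives `c ≤ 3g`. Reading `(ac)(bc) = c²(ab)` modulo `g ^ l` bounds `g ^ l`
by `O(g⁴)`, hence `l ≤ 5`, `n ≤ 6` and `m ≤ 12`.

When `ab + 1` is a single digit, `b ≤ √g` and `(b, ab + c)` determines the triple: there are
`O(g^{3/2})` such triples, and the box `(2t, 3t] × (t, 2t] × [1, t]` with `t = ⌊√g⌋ / 3` consists
of them. Otherwise `m ≥ 2`; then `d₂ R_n ≡ 1 (mod c)` fixes `d₂ mod c`, so `(n, c, ⌊d₂ / c⌋)`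
determines `a`, and `d₁ R_m ≡ 1 (mod a)` with `d₁ < a` determines `b` from `(a, m)`. The pairs
`(c, ⌊d₂ / c⌋)` with `c ≤ 3g`, `d₂ < g` number `O(g^{3/2})`.
-/

open Finset

def repunit (g k : ℕ) : ℕ := ∑ i ∈ range k, g ^ i

theorem repunit_mul_sub_one (g k : ℕ) : (repunit g k : ℤ) * (g - 1) = (g : ℤ) ^ k - 1 := by
  simpa [repunit] using geom_sum_mul (g : ℤ) k

theorem sub_one_mul_eq_of_eq_mul_repunit {g N d k : ℕ} (h : N = d * repunit g k) :
    ((g : ℤ) - 1) * N = d * ((g : ℤ) ^ k - 1) := by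
  rw [h, ← repunit_mul_sub_one]; push_cast; ring

theorem pow_pred_le_repunit (g : ℕ) {k : ℕ} (hk : 1 ≤ k) : g ^ (k - 1) ≤ repunit g k :=
  single_le_sum (fun i _ => Nat.zero_le (g ^ i)) (mem_range.mpr (by omega))

theorem mul_repunit_lt_pow {g d : ℕ} (hg : 1 ≤ g) (hd : d ≤ g - 1) (k : ℕ) :
    d * repunit g k < g ^ k := by
  have hR := repunit_mul_sub_one g k
  have hd' : (d : ℤ) ≤ g - 1 := by omega
  have hR0 : (0 : ℤ) ≤ repunit g k := by positivity
  have : (d * repunit g k : ℤ) < g ^ k := by nlinarith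
  exact_mod_cast this

theorem log_mul_repunit {g d k : ℕ} (hg : 2 ≤ g) (hd : 1 ≤ d) (hd' : d ≤ g - 1) (hk : 1 ≤ k) :
    Nat.log g (d * repunit g k) = k - 1 := by
  apply Nat.log_eq_of_pow_le_of_lt_pow
  · exact (pow_pred_le_repunit g hk).trans (Nat.le_mul_of_pos_left _ hd)
  · rw [Nat.sub_add_cancel hk]; exact mul_repunit_lt_pow (by omega) hd' k

theorem RepdigitT.exists_eq_mul_repunit {g N : ℕ} (hg : 2 ≤ g) (h : RepdigitT g N) :
    ∃ d k, 1 ≤ d ∧ d ≤ g - 1 ∧ 1 ≤ k ∧ N = d * repunit g k := by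
  obtain ⟨-, d, k, hd, hd', hk, he⟩ := h
  refine ⟨d, k, hd, hd', hk, ?_⟩
  have hcast : ((N * (g - 1) : ℕ) : ℤ) = ((d * (g ^ k - 1) : ℕ) : ℤ) := congrArg _ he
  push_cast [Nat.one_le_pow k g (by omega), (by omega : 1 ≤ g)] at hcast
  have he' : ((g : ℤ) - 1) * N = ((g : ℤ) - 1) * (d * repunit g k) := by
    linear_combination hcast - d * repunit_mul_sub_one g k
  exact_mod_cast mul_left_cancel₀ (by omega) he'

/-- For a repdigit `N = d * repunit g k` this is `d`, as `N` has `k = Nat.log g N + 1` digits. -/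
def repDigit (g N : ℕ) : ℕ := N / repunit g (Nat.log g N + 1)

theorem RepdigitT.repDigit_spec {g N : ℕ} (hg : 2 ≤ g) (h : RepdigitT g N) :
    1 ≤ repDigit g N ∧ repDigit g N ≤ g - 1 ∧ repDigit g N * repunit g (Nat.log g N + 1) = N := by
  obtain ⟨d, k, hd, hd', hk, rfl⟩ := h.exists_eq_mul_repunit hg
  have hR : 0 < repunit g k := (Nat.one_le_pow _ _ (by omega)).trans (pow_pred_le_repunit g hk)
  rw [repDigit, log_mul_repunit hg hd hd' hk, Nat.sub_add_cancel hk, Nat.mul_div_cancel _ hR]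
  exact ⟨hd, hd', rfl⟩

theorem repdigitT_of_le {g N : ℕ} (h : 1 ≤ N) (h' : N ≤ g - 1) : RepdigitT g N :=
  ⟨h, N, 1, h, h', le_rfl, by rw [pow_one]⟩

theorem pow_le_three_mul_of_eq_mul_repunit {g x y z D E M N : ℕ} (hg : 2 ≤ g) (hzy : z < y)
    (hD : D ≤ g - 1) (hE : E ≤ g - 1) (hNM : N ≤ M)
    (h₁ : x * y + 1 = D * repunit g M) (h₂ : x * z + 1 = E * repunit g N) :
    g ^ N ≤ 3 * g * y := by
  have e₁ := sub_one_mul_eq_of_eq_mul_repunit h₁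
  have e₂ := sub_one_mul_eq_of_eq_mul_repunit h₂
  push_cast at e₁ e₂
  have hD' : (D : ℤ) ≤ g - 1 := by omega
  have hE' : (E : ℤ) ≤ g - 1 := by omega
  have hg' : (2 : ℤ) ≤ g := by exact_mod_cast hg
  have hzy' : (z : ℤ) < y := by exact_mod_cast hzy
  have hP : (g : ℤ) ^ M = g ^ N * g ^ (M - N) := by rw [← pow_add, Nat.add_sub_cancel' hNM]
  set P : ℤ := (g : ℤ) ^ (M - N)
  have hP1 : 1 ≤ P := one_le_pow₀ (by omega)
  -- eliminating `x` leaves a multiple of `g ^ N` that is small and nonzero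
  have key : (g : ℤ) ^ N * (z * D * P - y * E) = z * D - y * E + (g - 1) * (z - y) := by
    linear_combination (-(z : ℤ)) * e₁ + y * e₂ - z * D * hP
  -- if `zDP = yE`, the right-hand side is `zD(1 - P) + (g - 1)(z - y) < 0`
  have hne : (z : ℤ) * D * P - y * E ≠ 0 := by
    intro h0
    rw [h0, mul_zero] at key
    nlinarith [mul_nonneg (mul_nonneg z.cast_nonneg D.cast_nonneg) (sub_nonneg.2 hP1)]
  have hsmall : |(z : ℤ) * D - y * E + (g - 1) * (z - y)| ≤ 3 * g * y := by
    rw [abs_le]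
    constructor <;> nlinarith [z.cast_nonneg (α := ℤ), D.cast_nonneg (α := ℤ),
      E.cast_nonneg (α := ℤ)]
  have : (g : ℤ) ^ N ≤ 3 * g * y := by
    calc (g : ℤ) ^ N ≤ |(g : ℤ) ^ N * (z * D * P - y * E)| := by
          rw [abs_mul, abs_of_pos (by positivity)]
          exact le_mul_of_one_le_right (by positivity) (Int.one_le_abs hne)
      _ ≤ 3 * g * y := key ▸ hsmall
  exact_mod_cast this

theorem pow_le_of_eq_mul_repunit {g a b c D₁ D₂ D₃ m n l : ℕ} (hg : 2 ≤ g) (hln : l ≤ n)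
    (hnm : n ≤ m) (h₁ : a * b + 1 = D₁ * repunit g m) (h₂ : a * c + 1 = D₂ * repunit g n)
    (h₃ : b * c + 1 = D₃ * repunit g l) :
    (g : ℤ) ^ l ≤ c ^ 2 * (g - 1) * (D₁ + g - 1) + (D₂ + g - 1) * (D₃ + g - 1) := by
  have e₁ := sub_one_mul_eq_of_eq_mul_repunit h₁
  have e₂ := sub_one_mul_eq_of_eq_mul_repunit h₂
  have e₃ := sub_one_mul_eq_of_eq_mul_repunit h₃
  push_cast at e₁ e₂ e₃
  have hg' : (2 : ℤ) ≤ g := by exact_mod_cast hg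
  have hP : (g : ℤ) ^ m = g ^ l * g ^ (m - l) := by rw [← pow_add]; congr 1; omega
  have hQ : (g : ℤ) ^ n = g ^ l * g ^ (n - l) := by rw [← pow_add]; congr 1; omega
  -- `(ac)(bc) = c²(ab)`, read modulo `g ^ l`
  have hdvd : (g : ℤ) ^ l ∣ c ^ 2 * (g - 1) * (D₁ + g - 1) + (D₂ + g - 1) * (D₃ + g - 1) :=
    ⟨c ^ 2 * (g - 1) * D₁ * g ^ (m - l) - D₂ * D₃ * g ^ (n - l) * g ^ l
      + D₂ * (D₃ + g - 1) * g ^ (n - l) + (D₂ + g - 1) * D₃, by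
      linear_combination (-(D₂ * ((g : ℤ) ^ n - 1) - (g - 1))) * e₃
        - (g - 1) * b * c * e₂ + c ^ 2 * (g - 1) * e₁ + c ^ 2 * (g - 1) * D₁ * hP
        - D₂ * D₃ * g ^ l * hQ + D₂ * (D₃ + g - 1) * hQ⟩
  refine Int.le_of_dvd ?_ hdvd
  have : (0 : ℤ) ≤ c ^ 2 * (g - 1) * (D₁ + g - 1) :=
    mul_nonneg (mul_nonneg (sq_nonneg _) (by omega)) (by omega)
  have : (0 : ℤ) < (D₂ + g - 1) * (D₃ + g - 1) := mul_pos (by omega) (by omega)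
  linarith

theorem modEq_of_mul_add_one_eq_mul {q u u' d d' R : ℕ} (h : q * u + 1 = d * R)
    (h' : q * u' + 1 = d' * R) : d ≡ d' [MOD q] := by
  have hz : (q * u + 1 : ℤ) = d * R := by exact_mod_cast h
  have hz' : (q * u' + 1 : ℤ) = d' * R := by exact_mod_cast h'
  have hcop : IsCoprime (q : ℤ) R := ⟨-u, d, by linear_combination -hz⟩
  exact Nat.modEq_iff_dvd.2 (hcop.dvd_of_dvd_mul_right ⟨u' - u, by linear_combination hz - hz'⟩)

theorem lt_of_mul_add_one_eq_mul {g a b d R : ℕ} (hd : d < g) (hR : g ≤ R) (hb : b < a)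
    (h : a * b + 1 = d * R) : d < a := by
  by_contra! had
  have : a * g ≤ a * b + 1 := h ▸ Nat.mul_le_mul had hR
  nlinarith

namespace DioTriplesT

variable {g a b c : ℕ}

theorem mem_iff : (a, b, c) ∈ DioTriplesT g ↔ 0 < c ∧ c < b ∧ b < a ∧ RepdigitT g (a * b + 1) ∧
    RepdigitT g (a * c + 1) ∧ RepdigitT g (b * c + 1) := Iff.rfl

theorem pow_le_three_mul (hg : 2 ≤ g) (h : (a, b, c) ∈ DioTriplesT g) :
    g ^ (Nat.log g (a * c + 1) + 1) ≤ 3 * g * b := by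
  obtain ⟨-, hcb, hba, h₁, h₂, -⟩ := mem_iff.1 h
  obtain ⟨-, hd₁, e₁⟩ := h₁.repDigit_spec hg
  obtain ⟨-, hd₂, e₂⟩ := h₂.repDigit_spec hg
  refine pow_le_three_mul_of_eq_mul_repunit hg hcb hd₁ hd₂ ?_ e₁.symm e₂.symm
  gcongr

theorem c_le_three_mul (hg : 2 ≤ g) (h : (a, b, c) ∈ DioTriplesT g) : c ≤ 3 * g := by
  have hn := pow_le_three_mul hg h
  obtain ⟨-, hcb, hba, -⟩ := mem_iff.1 h
  have hbc : b * c + 1 < g ^ (Nat.log g (b * c + 1) + 1) := Nat.lt_pow_succ_log_self (by omega) _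
  have hln : g ^ (Nat.log g (b * c + 1) + 1) ≤ g ^ (Nat.log g (a * c + 1) + 1) :=
    Nat.pow_le_pow_right (by omega) (by gcongr)
  have : c * g ^ (Nat.log g (a * c + 1) + 1) < 3 * g * g ^ (Nat.log g (a * c + 1) + 1) :=
    calc c * g ^ (Nat.log g (a * c + 1) + 1) ≤ c * (3 * g * b) := by gcongr
      _ = 3 * g * (b * c) := by ring
      _ < 3 * g * g ^ (Nat.log g (a * c + 1) + 1) := by gcongr; omega
  exact (Nat.lt_of_mul_lt_mul_right this).le

theorem bc_add_one_lt_pow (hg : 5 ≤ g) (h : (a, b, c) ∈ DioTriplesT g) :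
    b * c + 1 < g ^ 5 := by
  have hc := c_le_three_mul (by omega) h
  obtain ⟨-, hcb, hba, h₁, h₂, h₃⟩ := mem_iff.1 h
  obtain ⟨-, hd₁, e₁⟩ := h₁.repDigit_spec (by omega)
  obtain ⟨-, hd₂, e₂⟩ := h₂.repDigit_spec (by omega)
  obtain ⟨-, hd₃, e₃⟩ := h₃.repDigit_spec (by omega)
  have hW := pow_le_of_eq_mul_repunit (by omega) (by gcongr) (by gcongr) e₁.symm e₂.symm e₃.symm
  set D₁ := repDigit g (a * b + 1)
  set D₂ := repDigit g (a * c + 1)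
  set D₃ := repDigit g (b * c + 1)
  have hg' : (5 : ℤ) ≤ g := by exact_mod_cast hg
  have hc' : (c : ℤ) ≤ 3 * g := by exact_mod_cast hc
  have hd₁' : (D₁ : ℤ) ≤ g - 1 := by omega
  have hd₂' : (D₂ : ℤ) ≤ g - 1 := by omega
  have hd₃' : (D₃ : ℤ) ≤ g - 1 := by omega
  have k₁ : (c : ℤ) ^ 2 * (g - 1) * (D₁ + g - 1) ≤ (3 * g) ^ 2 * g * (2 * g) := by
    gcongr <;> omega
  have k₂ : ((D₂ : ℤ) + g - 1) * (D₃ + g - 1) ≤ (2 * g) * (2 * g) := by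
    gcongr <;> omega
  have hlt : (g : ℤ) ^ (Nat.log g (b * c + 1) + 1) < g ^ 6 := by
    have hg2 : (25 : ℤ) ≤ g ^ 2 := by nlinarith
    have hg4 : (25 : ℤ) * g ^ 4 ≤ g ^ 6 := by
      rw [show (g : ℤ) ^ 6 = g ^ 2 * g ^ 4 by ring]; gcongr
    nlinarith
  have hl : Nat.log g (b * c + 1) + 1 ≤ 5 := by
    have := (pow_lt_pow_iff_right₀ (by omega : (1 : ℤ) < g)).1 hlt
    omega
  calc b * c + 1 < g ^ (Nat.log g (b * c + 1) + 1) := Nat.lt_pow_succ_log_self (by omega) _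
    _ ≤ g ^ 5 := Nat.pow_le_pow_right (by omega) hl

theorem ac_add_one_lt_pow (hg : 5 ≤ g) (h : (a, b, c) ∈ DioTriplesT g) :
    a * c + 1 < g ^ 6 := by
  have hn := pow_le_three_mul (by omega) h
  have hbc := bc_add_one_lt_pow hg h
  obtain ⟨hc, -⟩ := mem_iff.1 h
  have : g ^ (Nat.log g (a * c + 1) + 1) < g ^ 7 :=
    calc g ^ (Nat.log g (a * c + 1) + 1) ≤ 3 * g * b := hn
      _ ≤ 3 * g * (b * c) := by gcongr; exact Nat.le_mul_of_pos_right b hc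
      _ < g * g * g ^ 5 := by gcongr <;> omega
      _ = g ^ 7 := by ring
  have hn6 := (Nat.pow_lt_pow_iff_right (by omega)).1 this
  calc a * c + 1 < g ^ (Nat.log g (a * c + 1) + 1) := Nat.lt_pow_succ_log_self (by omega) _
    _ ≤ g ^ 6 := Nat.pow_le_pow_right (by omega) (by omega)

theorem ab_add_one_lt_pow (hg : 5 ≤ g) (h : (a, b, c) ∈ DioTriplesT g) :
    a * b + 1 < g ^ 12 := by
  have hac := ac_add_one_lt_pow hg h
  obtain ⟨hc, -, hba, -⟩ := mem_iff.1 h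
  have ha : a ≤ a * c + 1 := (Nat.le_mul_of_pos_right a hc).trans (Nat.le_succ _)
  calc a * b + 1 ≤ a * a := by nlinarith
    _ ≤ (a * c + 1) ^ 2 := by rw [sq]; gcongr
    _ < (g ^ 6) ^ 2 := by gcongr
    _ = g ^ 12 := by ring

theorem finite (hg : 5 ≤ g) : (DioTriplesT g).Finite := by
  refine (range (g ^ 6) ×ˢ range (g ^ 6) ×ˢ range (g ^ 6)).finite_toSet.subset ?_
  rintro ⟨a, b, c⟩ h
  have hac := ac_add_one_lt_pow hg h
  obtain ⟨hc, hcb, hba, -⟩ := mem_iff.1 h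
  have : a ≤ a * c := Nat.le_mul_of_pos_right a hc
  simp only [Finset.coe_product, Finset.coe_range, Set.mem_prod, Set.mem_Iio]
  omega

theorem repDigit_lt (hg : 2 ≤ g) (h : (a, b, c) ∈ DioTriplesT g) (hab : g ≤ a * b + 1) :
    repDigit g (a * b + 1) < a := by
  obtain ⟨-, -, hba, h₁, -⟩ := mem_iff.1 h
  obtain ⟨-, hd₁, e₁⟩ := h₁.repDigit_spec hg
  refine lt_of_mul_add_one_eq_mul (show _ < g by omega) ?_ hba e₁.symm
  calc g ≤ g ^ Nat.log g (a * b + 1) := Nat.le_self_pow (Nat.log_pos (by omega) hab).ne' g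
    _ ≤ repunit g (Nat.log g (a * b + 1) + 1) := pow_pred_le_repunit g (Nat.le_add_left 1 _)

theorem ncard_oneDigit_le (g : ℕ) :
    {p ∈ DioTriplesT g | p.1 * p.2.1 + 1 < g}.ncard ≤ 2 * g * Nat.sqrt g := by
  calc _ ≤ ((Icc 1 (Nat.sqrt g) ×ˢ range (2 * g) : Finset (ℕ × ℕ)) : Set (ℕ × ℕ)).ncard :=
        Set.ncard_le_ncard_of_injOn (fun p => (p.2.1, p.1 * p.2.1 + p.2.2)) ?_ ?_
    _ = 2 * g * Nat.sqrt g := by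
        rw [Set.ncard_coe_finset, card_product, Nat.card_Icc, Nat.add_sub_cancel, card_range]
        ring
  · rintro ⟨a, b, c⟩ ⟨h, hab⟩
    obtain ⟨hc, hcb, hba, -⟩ := mem_iff.1 h
    simp only [Finset.coe_product, Finset.coe_Icc, Finset.coe_range, Set.mem_prod, Set.mem_Icc,
      Set.mem_Iio] at hab ⊢
    refine ⟨⟨by omega, Nat.le_sqrt.2 (by nlinarith)⟩, by nlinarith⟩
  · rintro ⟨a, b, c⟩ ⟨h, -⟩ ⟨a', b', c'⟩ ⟨h', -⟩ heq
    obtain ⟨-, hcb, -⟩ := mem_iff.1 h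
    obtain ⟨-, hcb', -⟩ := mem_iff.1 h'
    simp only [Prod.mk.injEq] at heq ⊢
    obtain ⟨rfl, heq⟩ := heq
    -- `a * b + c` with `c < b` recovers `a` and `c` by division with remainder
    obtain rfl : a = a' := by
      rcases lt_trichotomy a a' with h | h | h
      · nlinarith
      · exact h
      · nlinarith
    exact ⟨rfl, rfl, by omega⟩

/-- Writing `ac + 1 = d₂ R_n` and `ab + 1 = d₁ R_m`, this is `((n - 1, m - 1), c, ⌊d₂ / c⌋)`. -/
def signature (g : ℕ) (p : ℕ × ℕ × ℕ) : (ℕ × ℕ) × ℕ × ℕ :=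
  ((Nat.log g (p.1 * p.2.2 + 1), Nat.log g (p.1 * p.2.1 + 1)),
    p.2.2, repDigit g (p.1 * p.2.2 + 1) / p.2.2)

theorem mapsTo_signature (hg : 5 ≤ g) :
    Set.MapsTo (signature g) {p ∈ DioTriplesT g | g ≤ p.1 * p.2.1 + 1}
      ↑((range 6 ×ˢ Icc 1 11) ×ˢ
        (Icc 1 (Nat.sqrt g) ×ˢ range g ∪ Icc 1 (3 * g) ×ˢ range (Nat.sqrt g + 1))) := by
  rintro ⟨a, b, c⟩ ⟨h, hab⟩
  have hc3 := c_le_three_mul (by omega) h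
  have hac := ac_add_one_lt_pow hg h
  have hab' := ab_add_one_lt_pow hg h
  obtain ⟨hc, -, -, -, h₂, -⟩ := mem_iff.1 h
  obtain ⟨-, hd₂, -⟩ := h₂.repDigit_spec (by omega)
  simp only [signature, Finset.coe_product, Finset.coe_union, Finset.coe_range, Finset.coe_Icc,
    Set.mem_prod, Set.mem_union, Set.mem_Iio, Set.mem_Icc] at hab ⊢
  refine ⟨⟨Nat.log_lt_of_lt_pow (by omega) hac,
    Nat.log_pos (by omega) hab, Nat.lt_succ_iff.1 (Nat.log_lt_of_lt_pow (by omega) hab')⟩, ?_⟩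
  by_cases hcs : c ≤ Nat.sqrt g
  · exact Or.inl ⟨⟨hc, hcs⟩, (Nat.div_le_self _ _).trans_lt (by omega)⟩
  · refine Or.inr ⟨⟨hc, hc3⟩, (Nat.div_lt_iff_lt_mul hc).2 ?_⟩
    calc repDigit g (a * c + 1) < (Nat.sqrt g + 1) ^ 2 := by
          have := Nat.sqrt_lt'.1 (Nat.lt_add_one (Nat.sqrt g)); omega
      _ ≤ (Nat.sqrt g + 1) * c := by rw [sq]; gcongr; omega

theorem injOn_signature (hg : 2 ≤ g) :
    Set.InjOn (signature g) {p ∈ DioTriplesT g | g ≤ p.1 * p.2.1 + 1} := by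
  rintro ⟨a, b, c⟩ ⟨h, hab⟩ ⟨a', b', c'⟩ ⟨h', hab'⟩ heq
  simp only [signature, Prod.mk.injEq] at heq hab hab'
  obtain ⟨⟨hn, hm⟩, rfl, hq⟩ := heq
  obtain ⟨hc, -, -, -, h₂, -⟩ := mem_iff.1 h
  obtain ⟨-, -, -, -, h₂', -⟩ := mem_iff.1 h'
  obtain ⟨-, -, e₂⟩ := h₂.repDigit_spec hg
  obtain ⟨-, -, e₂'⟩ := h₂'.repDigit_spec hg
  rw [← hn] at e₂'
  -- `d₂ R_n ≡ 1 (mod c)` fixes `d₂ mod c`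
  have hd₂ : repDigit g (a * c + 1) = repDigit g (a' * c + 1) := by
    have hmod := modEq_of_mul_add_one_eq_mul (q := c) (by rw [e₂, mul_comm])
      (by rw [e₂', mul_comm])
    rw [← Nat.div_add_mod (repDigit g (a * c + 1)) c,
      ← Nat.div_add_mod (repDigit g (a' * c + 1)) c, hq, hmod]
  obtain rfl : a = a' := by
    have : a * c + 1 = a' * c + 1 := by rw [← e₂, ← e₂', hd₂]
    exact Nat.eq_of_mul_eq_mul_right hc (by omega)
  obtain ⟨-, -, hba, h₁, -⟩ := mem_iff.1 h
  obtain ⟨-, -, -, h₁', -⟩ := mem_iff.1 h'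
  obtain ⟨-, -, e₁⟩ := h₁.repDigit_spec hg
  obtain ⟨-, -, e₁'⟩ := h₁'.repDigit_spec hg
  rw [← hm] at e₁'
  -- `d₁ R_m ≡ 1 (mod a)` and `d₁ < a` fix `d₁`
  have hd₁ : repDigit g (a * b + 1) = repDigit g (a * b' + 1) :=
    (modEq_of_mul_add_one_eq_mul e₁.symm e₁'.symm).eq_of_lt_of_lt (repDigit_lt hg h hab)
      (repDigit_lt hg h' hab')
  obtain rfl : b = b' := by
    have : a * b + 1 = a * b' + 1 := by rw [← e₁, ← e₁', hd₁]
    exact Nat.eq_of_mul_eq_mul_left (show 0 < a by omega) (by omega)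
  rfl

theorem ncard_multiDigit_le (hg : 5 ≤ g) :
    {p ∈ DioTriplesT g | g ≤ p.1 * p.2.1 + 1}.ncard ≤ 462 * g * Nat.sqrt g := by
  refine (Set.ncard_le_ncard_of_injOn _ (mapsTo_signature hg)
    (injOn_signature (by omega))).trans ?_
  have hs : 1 ≤ Nat.sqrt g := Nat.le_sqrt.2 (by omega)
  rw [Set.ncard_coe_finset, card_product, card_product, card_range, Nat.card_Icc]
  calc 6 * (11 + 1 - 1) * _ ≤ 66 * (Nat.sqrt g * g + 3 * g * (Nat.sqrt g + 1)) := by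
        refine Nat.mul_le_mul_left _ ((card_union_le _ _).trans ?_)
        simp only [card_product, card_range, Nat.card_Icc, Nat.add_sub_cancel, le_refl]
    _ ≤ 462 * g * Nat.sqrt g := by nlinarith

theorem ncard_le (hg : 5 ≤ g) : (DioTriplesT g).ncard ≤ 464 * g * Nat.sqrt g := by
  have hsplit : DioTriplesT g =
      {p ∈ DioTriplesT g | p.1 * p.2.1 + 1 < g} ∪ {p ∈ DioTriplesT g | g ≤ p.1 * p.2.1 + 1} := by
    ext p
    simp only [Set.mem_union, Set.mem_sep_iff, ← and_or_left, iff_self_and]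
    exact fun _ => lt_or_ge _ _
  calc (DioTriplesT g).ncard
      ≤ {p ∈ DioTriplesT g | p.1 * p.2.1 + 1 < g}.ncard
        + {p ∈ DioTriplesT g | g ≤ p.1 * p.2.1 + 1}.ncard :=
        (congrArg Set.ncard hsplit).le.trans (Set.ncard_union_le _ _)
    _ ≤ 2 * g * Nat.sqrt g + 462 * g * Nat.sqrt g :=
        add_le_add (ncard_oneDigit_le g) (ncard_multiDigit_le hg)
    _ = 464 * g * Nat.sqrt g := by ring

theorem cube_le_ncard (hfin : (DioTriplesT g).Finite) :
    (Nat.sqrt g / 3) ^ 3 ≤ (DioTriplesT g).ncard := by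
  set t := Nat.sqrt g / 3
  have ht : 9 * (t * t) ≤ g :=
    calc 9 * (t * t) = (3 * t) * (3 * t) := by ring
      _ ≤ Nat.sqrt g * Nat.sqrt g := by gcongr <;> omega
      _ ≤ g := Nat.sqrt_le g
  calc t ^ 3 = ((Ioc (2 * t) (3 * t) ×ˢ Ioc t (2 * t) ×ˢ Icc 1 t :
          Finset (ℕ × ℕ × ℕ)) : Set (ℕ × ℕ × ℕ)).ncard := by
        rw [Set.ncard_coe_finset, card_product, card_product, Nat.card_Ioc, Nat.card_Ioc,
          Nat.card_Icc]
        rw [show 3 * t - 2 * t = t by omega, show 2 * t - t = t by omega, Nat.add_sub_cancel]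
        ring
    _ ≤ (DioTriplesT g).ncard := Set.ncard_le_ncard ?_ hfin
  rintro ⟨a, b, c⟩ hp
  simp only [Finset.coe_product, Finset.coe_Ioc, Finset.coe_Icc, Set.mem_prod, Set.mem_Ioc,
    Set.mem_Icc] at hp
  obtain ⟨⟨ha, ha'⟩, ⟨hb, hb'⟩, hc, hc'⟩ := hp
  have hab : a * b ≤ 3 * t * (2 * t) := Nat.mul_le_mul ha' hb'
  have hac : a * c ≤ a * b := Nat.mul_le_mul_left a (by omega)
  have hbc : b * c ≤ a * b := by rw [mul_comm a]; exact Nat.mul_le_mul_left b (by omega)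
  have hab1 : a * b + 1 ≤ g - 1 := by
    have : 3 * t * (2 * t) + 2 ≤ 9 * (t * t) := by nlinarith
    omega
  refine mem_iff.2 ⟨by omega, by omega, by omega, repdigitT_of_le (by omega) hab1,
    repdigitT_of_le (by omega) (by omega), repdigitT_of_le (by omega) (by omega)⟩

end DioTriplesT

theorem stmt_16 :
    ∃ c₁ c₂ : ℝ, 0 < c₁ ∧ 0 < c₂ ∧ ∃ G : ℕ, ∀ g : ℕ, G ≤ g →
      (DioTriplesT g).Finite ∧
      c₁ * (g : ℝ) ^ ((3 : ℝ) / 2) ≤ (Nat.card (DioTriplesT g) : ℝ) ∧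
      (Nat.card (DioTriplesT g) : ℝ) ≤ c₂ * (g : ℝ) ^ ((3 : ℝ) / 2) := by
  refine ⟨1 / 216, 464, by norm_num, by norm_num, 9, fun g hg => ?_⟩
  have hfin := DioTriplesT.finite (by omega : 5 ≤ g)
  have hpow : (g : ℝ) ^ ((3 : ℝ) / 2) = √g ^ 3 := by
    rw [Real.rpow_div_two_eq_sqrt _ g.cast_nonneg]; norm_cast
  have hs : (Nat.sqrt g : ℝ) ≤ √g := Real.nat_sqrt_le_real_sqrt
  have hs' : √g < Nat.sqrt g + 1 := Real.real_sqrt_lt_nat_sqrt_succ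
  have hsq : (g : ℝ) = √g ^ 2 := (Real.sq_sqrt g.cast_nonneg).symm
  rw [Nat.card_coe_set_eq, hpow]
  refine ⟨hfin, ?_, ?_⟩
  · have h3 : 3 ≤ Nat.sqrt g := Nat.le_sqrt.2 (by omega)
    have ht : ((Nat.sqrt g : ℕ) : ℝ) + 1 ≤ 6 * (Nat.sqrt g / 3 : ℕ) := by
      exact_mod_cast (by omega)
    have hcube : (((Nat.sqrt g / 3 : ℕ) : ℝ)) ^ 3 ≤ (DioTriplesT g).ncard := by
      exact_mod_cast DioTriplesT.cube_le_ncard hfin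
    calc 1 / 216 * √g ^ 3 ≤ 1 / 216 * (6 * (Nat.sqrt g / 3 : ℕ)) ^ 3 := by
          gcongr; exact hs'.le.trans ht
      _ = ((Nat.sqrt g / 3 : ℕ) : ℝ) ^ 3 := by ring
      _ ≤ _ := hcube
  · have hle : ((DioTriplesT g).ncard : ℝ) ≤ 464 * g * Nat.sqrt g := by
      exact_mod_cast DioTriplesT.ncard_le (by omega : 5 ≤ g)
    calc ((DioTriplesT g).ncard : ℝ) ≤ 464 * g * Nat.sqrt g := hle
      _ ≤ 464 * √g ^ 2 * √g := by rw [← hsq]; gcongr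
      _ = 464 * √g ^ 3 := by ring
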